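/- For any virtual graph G, the S-polynomial and the flow polynomial agree at Q = 0: S_G(0) = F_G(0). -/

import Mathlib

open Polynomial

noncomputable section
open scoped Classical

/-- A ribbon graph (combinatorial map), given by a finite set of half-edges
together with a fixed-point-free involution `edgePair` (pairing the two half-edges
of each edge) and a rotation permutation `rot` whose cycles are the vertices with
their counterclockwise rotation system. -/
structure RibbonGraph where
  H : Type
  fintypeH : Fintype H
  decH : DecidableEq H
  edgePair : Equiv.Perm H
  rot : Equiv.Perm H
  edgePair_invol : ∀ h, edgePair (edgePair h) = h
  edgePair_nofix : ∀ h, edgePair h ≠ h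

namespace RibbonGraph

variable (G : RibbonGraph)

instance : Fintype G.H := G.fintypeH
instance : DecidableEq G.H := G.decH

/-- Edges are the orbits of the involution `edgePair`. -/
def edgeSetoid : Setoid G.H :=
  ⟨G.edgePair.SameCycle, ⟨fun _ => Equiv.Perm.SameCycle.refl _ _,
    fun h => h.symm, fun h h' => h.trans h'⟩⟩

def EdgeSet := Quotient G.edgeSetoid

instance : Finite G.EdgeSet := Quotient.finite _
instance : Fintype G.EdgeSet := Fintype.ofFinite _

def edgeOf (h : G.H) : G.EdgeSet := Quotient.mk G.edgeSetoid h

/-- Vertices are the orbits of the rotation `rot`. -/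
def vertexSetoid : Setoid G.H :=
  ⟨G.rot.SameCycle, ⟨fun _ => Equiv.Perm.SameCycle.refl _ _,
    fun h => h.symm, fun h h' => h.trans h'⟩⟩

def VertexSet := Quotient G.vertexSetoid

instance : Finite G.VertexSet := Quotient.finite _
instance : Fintype G.VertexSet := Fintype.ofFinite _

def vertexOf (h : G.H) : G.VertexSet := Quotient.mk G.vertexSetoid h

def numVertices : ℕ := Nat.card G.VertexSet
def numEdges : ℕ := Nat.card G.EdgeSet

/-- One step of the connectivity relation of `G − D` (`D` a set of deleted edges):
half-edges at a common vertex are connected, as are the two halves of a kept edge.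
Vertices all of whose half-edges are deleted remain as isolated components. -/
def connStep (D : Finset G.EdgeSet) (x y : G.H) : Prop :=
  G.rot.SameCycle x y ∨ (G.edgeOf x ∉ D ∧ y = G.edgePair x)

/-- `b₀(G − D)`: number of connected components of the deletion `G − D`. -/
def b0Del (D : Finset G.EdgeSet) : ℕ :=
  Nat.card (Quotient (Setoid.mk _ (Relation.EqvGen.is_equivalence (G.connStep D))))

def numEdgesDel (D : Finset G.EdgeSet) : ℕ := G.numEdges - D.card

/-- `b₁(G − D)`: the cycle rank `|E| − |V| + b₀` of the deletion. -/
def b1Del (D : Finset G.EdgeSet) : ℤ :=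
  (G.numEdgesDel D : ℤ) - (G.numVertices : ℤ) + (G.b0Del D : ℤ)

/-- One step of the face (boundary-walk) relation of `G − D`: from a kept half-edge `x`,
go to its partner and then rotate, skipping deleted half-edges. Its equivalence classes
through kept half-edges are the boundary components of `G − D`. -/
def faceStep (D : Finset G.EdgeSet) (x y : G.H) : Prop :=
  G.edgeOf x ∉ D ∧ G.edgeOf y ∉ D ∧
    ∃ m : ℕ, 0 < m ∧ y = (G.rot ^ m) (G.edgePair x) ∧
      ∀ j, 0 < j → j < m → G.edgeOf ((G.rot ^ j) (G.edgePair x)) ∈ D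

def faceSetoid (D : Finset G.EdgeSet) : Setoid G.H :=
  Setoid.mk _ (Relation.EqvGen.is_equivalence (G.faceStep D))

/-- The number of boundary components (faces) of the ribbon graph `G − D`:
face-classes of kept half-edges, plus one circle for each fully deleted vertex. -/
def facesDel (D : Finset G.EdgeSet) : ℕ :=
  Nat.card {c : Quotient (G.faceSetoid D) // ∃ h, G.edgeOf h ∉ D ∧ Quotient.mk (G.faceSetoid D) h = c}
    + Nat.card {v : G.VertexSet // ∀ h, G.vertexOf h = v → G.edgeOf h ∈ D}

/-- The genus of `G − D`, via the Euler characteristic relation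
`|V| − |E| + f = 2b₀ − 2g`, i.e. `2g = b₁ − f + b₀`. -/
def genusDel (D : Finset G.EdgeSet) : ℤ :=
  (G.b1Del D - (G.facesDel D : ℤ) + (G.b0Del D : ℤ)) / 2

/-- The `S`-polynomial state sum `S_G(Q) = Σ_{T⊆E} (−1)^{|T|} Q^{b₁(G−T) − g(G−T)}`. -/
def SPoly : Polynomial ℚ :=
  ∑ D : Finset G.EdgeSet, (-1 : Polynomial ℚ) ^ D.card * X ^ (G.b1Del D - G.genusDel D).toNat

/-- The flow polynomial state sum `F_G(Q) = Σ_{T⊆E} (−1)^{|T|} Q^{b₁(G−T)}`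
of the underlying graph. -/
def FPoly : Polynomial ℚ :=
  ∑ D : Finset G.EdgeSet, (-1 : Polynomial ℚ) ^ D.card * X ^ (G.b1Del D).toNat

/-- A bridge: an edge whose deletion increases the number of connected components. -/
def IsBridge (e : G.EdgeSet) : Prop := G.b0Del ∅ < G.b0Del {e}

/-- `e` is a coloop of the deletion `G − D`: the two boundary components of `G − D`
adjacent to (parallel to) the edge `e` coincide. -/
def IsColoopIn (D : Finset G.EdgeSet) (e : G.EdgeSet) : Prop :=
  e ∉ D ∧ ∃ a, G.edgeOf a = e ∧ Relation.EqvGen (G.faceStep D) a (G.edgePair a)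

/-- A coloop of `G`: the two boundary components adjacent to the edge coincide
(equivalently, the dual edge is a loop of the dual graph). -/
def IsColoop (e : G.EdgeSet) : Prop := G.IsColoopIn ∅ e

/-- Degree of the vertex containing the half-edge `h`: the length of its rotation cycle. -/
def vertexDegree (h : G.H) : ℕ := Nat.card {x : G.H // G.rot.SameCycle h x}

/-- Degree of a vertex: the number of half-edges incident to it. -/
def vDeg (v : G.VertexSet) : ℕ := Nat.card {h : G.H // G.vertexOf h = v}

end RibbonGraph

/-!
At `Q = 0` a state `D` contributes to `S_G` iff `b₁ − g = 0` for `G − D`, and to `F_G` iff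
`b₁ = 0`; these agree because `0 ≤ 2g ≤ b₁`. To see this, encode `G − D` as a combinatorial map
on its half-edges: the vertices are the cycles of the rotation `ψ` (the first return of `G.rot`),
the edges those of the pairing `τ`, the faces those of `ψ * τ`, and the components are the joint
orbits of `ψ` and `τ`. Then `2g ≤ b₁` says that every component has a face, and `0 ≤ g` is
Euler's inequality `c(ψ) + c(τ) + c(ψτ) ≤ n + 2 · #orbits`.
-/

namespace Relation

variable {X : Type*}

def numClasses (r : X → X → Prop) : ℕ := Nat.card (Quot r)

theorem numClasses_eq_card {Y : Type*} {r : X → X → Prop} (f : X → Y) (hf : f.Surjective)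
    (hr : ∀ x y, f x = f y ↔ EqvGen r x y) : numClasses r = Nat.card Y := by
  refine Nat.card_congr (Equiv.ofBijective (Quot.lift f fun x y h => (hr x y).2 (.rel _ _ h))
    ⟨fun p q hpq => ?_, fun y => ?_⟩)
  · induction p using Quot.ind
    induction q using Quot.ind
    exact Quot.eqvGen_sound ((hr _ _).1 hpq)
  · obtain ⟨x, rfl⟩ := hf y
    exact ⟨Quot.mk r x, rfl⟩

theorem numClasses_le_card [Finite X] (r : X → X → Prop) : numClasses r ≤ Nat.card X :=
  Nat.card_le_card_of_surjective _ Quot.mk_surjective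

theorem numClasses_le_of_le_eqvGen [Finite X] {r s : X → X → Prop} (h : r ≤ EqvGen s) :
    numClasses s ≤ numClasses r :=
  Nat.card_le_card_of_surjective
    (Quot.lift (Quot.mk s) fun x y hxy => Quot.eqvGen_sound (h x y hxy))
    fun q => by
      induction q using Quot.ind with | _ x => exact ⟨Quot.mk r x, rfl⟩

theorem numClasses_congr [Finite X] {r s : X → X → Prop} (hrs : r ≤ EqvGen s)
    (hsr : s ≤ EqvGen r) : numClasses r = numClasses s :=
  le_antisymm (numClasses_le_of_le_eqvGen hsr) (numClasses_le_of_le_eqvGen hrs)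

theorem eqvGen_iff_of_subtype {p : X → Prop} {r : X → X → Prop}
    {s : Subtype p → Subtype p → Prop} (hrs : ∀ a b, r a b ↔ ∃ ha hb, s ⟨a, ha⟩ ⟨b, hb⟩)
    {x y : Subtype p} : EqvGen r x y ↔ EqvGen s x y := by
  constructor
  · intro hxy
    suffices ∀ a b, EqvGen r a b → a = b ∨ ∃ ha hb, EqvGen s ⟨a, ha⟩ ⟨b, hb⟩ by
      rcases this x y hxy with h | ⟨_, _, h⟩
      · exact Subtype.ext h ▸ .refl _
      · exact h
    intro a b hab
    induction hab with
    | rel a b h =>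
      obtain ⟨ha, hb, h⟩ := (hrs a b).1 h
      exact .inr ⟨ha, hb, .rel _ _ h⟩
    | refl => exact .inl rfl
    | symm a b _ ih =>
      rcases ih with rfl | ⟨ha, hb, h⟩
      · exact .inl rfl
      · exact .inr ⟨hb, ha, h.symm⟩
    | trans a b c _ _ ihab ihbc =>
      rcases ihab with rfl | ⟨ha, hb, hab⟩
      · exact ihbc
      rcases ihbc with rfl | ⟨_, hc, hbc⟩
      · exact .inr ⟨ha, hb, hab⟩
      · exact .inr ⟨ha, hc, hab.trans _ _ _ hbc⟩
  · intro h
    induction h with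
    | rel a b h => exact .rel _ _ ((hrs a b).2 ⟨a.2, b.2, h⟩)
    | refl => exact .refl _
    | symm _ _ _ ih => exact ih.symm
    | trans _ _ _ _ _ ihab ihbc => exact ihab.trans _ _ _ ihbc

def addRel (r : X → X → Prop) (a b : X) : X → X → Prop := fun x y => r x y ∨ (x = a ∧ y = b)

theorem eqvGen_addRel_cases {r : X → X → Prop} {a b x y : X} (h : EqvGen (addRel r a b) x y) :
    EqvGen r x y ∨ (EqvGen r x a ∧ EqvGen r b y) ∨ (EqvGen r x b ∧ EqvGen r a y) := by
  induction h with
  | rel u v huv =>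
    rcases huv with h | ⟨rfl, rfl⟩
    · exact .inl (.rel _ _ h)
    · exact .inr (.inl ⟨.refl _, .refl _⟩)
  | refl => exact .inl (.refl _)
  | symm u v _ ih =>
    rcases ih with h | ⟨h₁, h₂⟩ | ⟨h₁, h₂⟩
    · exact .inl h.symm
    · exact .inr (.inr ⟨h₂.symm, h₁.symm⟩)
    · exact .inr (.inl ⟨h₂.symm, h₁.symm⟩)
  | trans u v w _ _ ih₁ ih₂ =>
    rcases ih₁ with h | ⟨h₁, h₂⟩ | ⟨h₁, h₂⟩ <;> rcases ih₂ with g | ⟨g₁, g₂⟩ | ⟨g₁, g₂⟩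
    · exact .inl (h.trans _ _ _ g)
    · exact .inr (.inl ⟨h.trans _ _ _ g₁, g₂⟩)
    · exact .inr (.inr ⟨h.trans _ _ _ g₁, g₂⟩)
    · exact .inr (.inl ⟨h₁, h₂.trans _ _ _ g⟩)
    · exact .inr (.inl ⟨h₁, g₂⟩)
    · exact .inl (h₁.trans _ _ _ g₂)
    · exact .inr (.inr ⟨h₁, h₂.trans _ _ _ g⟩)
    · exact .inl (h₁.trans _ _ _ g₂)
    · exact .inr (.inr ⟨h₁, g₂⟩)

variable [Finite X] {r : X → X → Prop} {a b : X}

theorem numClasses_addRel_le : numClasses (addRel r a b) ≤ numClasses r :=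
  numClasses_le_of_le_eqvGen fun _ _ h => .rel _ _ (.inl h)

theorem numClasses_addRel_of_eqvGen (h : EqvGen r a b) :
    numClasses (addRel r a b) = numClasses r :=
  numClasses_congr (fun _ _ hxy => hxy.elim (.rel _ _) fun ⟨hx, hy⟩ => hx ▸ hy ▸ h)
    fun _ _ hxy => .rel _ _ (.inl hxy)

/-- Away from the class of `b`, the classes of `r` and of `addRel r a b` correspond. -/
theorem numClasses_addRel_add_one (h : ¬EqvGen r a b) :
    numClasses (addRel r a b) + 1 = numClasses r := by
  let f : {c : Quot r // c ≠ Quot.mk r b} → Quot (addRel r a b) :=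
    fun c => Quot.lift (Quot.mk _) (fun _ _ hxy => Quot.sound (.inl hxy)) c.1
  have hf : f.Bijective := by
    refine ⟨fun ⟨c, hc⟩ ⟨d, hd⟩ hcd => ?_, fun q => ?_⟩
    · induction c using Quot.ind
      induction d using Quot.ind
      rcases eqvGen_addRel_cases (Quot.eqvGen_exact hcd) with h' | ⟨_, h'⟩ | ⟨h', _⟩
      · exact Subtype.ext (Quot.eqvGen_sound h')
      · exact absurd (Quot.eqvGen_sound h').symm hd
      · exact absurd (Quot.eqvGen_sound h') hc
    · induction q using Quot.ind with | _ x =>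
      by_cases hx : Quot.mk r x = Quot.mk r b
      · refine ⟨⟨Quot.mk r a, fun hab => h (Quot.eqvGen_exact hab)⟩, ?_⟩
        exact (Quot.sound (.inr ⟨rfl, rfl⟩)).trans
          (Quot.eqvGen_sound ((EqvGen.mono fun _ _ => .inl) _ _ (Quot.eqvGen_exact hx).symm))
      · exact ⟨⟨Quot.mk r x, hx⟩, rfl⟩
  rw [numClasses, numClasses, ← Nat.card_congr (Equiv.ofBijective f hf),
    ← Nat.card_congr (Equiv.optionSubtypeNe (Quot.mk r b)), Finite.card_option]

theorem numClasses_le_numClasses_addRel_add_one : numClasses r ≤ numClasses (addRel r a b) + 1 := by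
  by_cases h : EqvGen r a b
  · rw [numClasses_addRel_of_eqvGen h]; omega
  · rw [numClasses_addRel_add_one h]

end Relation

namespace Equiv.Perm

open Relation

variable {X : Type*}

/-- Fixed points count as cycles, unlike in `Equiv.Perm.cycleType`. -/
def numCycles (σ : Perm X) : ℕ := numClasses fun x y => σ x = y

def numJointOrbits (α β : Perm X) : ℕ := numClasses fun x y => α x = y ∨ β x = y

theorem sameCycle_iff_of_involutive {σ : Perm X} (hσ : Function.Involutive σ) {x y : X} :
    σ.SameCycle x y ↔ y = x ∨ y = σ x := by
  refine ⟨?_, fun h => h.elim (fun h => h ▸ .refl _ _) fun h => ⟨1, by simp [h]⟩⟩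
  rintro ⟨k, rfl⟩
  have hsq : σ ^ (2 : ℤ) = 1 := Equiv.ext fun x => by rw [zpow_two, mul_apply, hσ x, one_apply]
  obtain ⟨m, rfl | rfl⟩ := Int.even_or_odd' k
  · simp [zpow_mul, hsq]
  · simp [zpow_add, zpow_mul, hsq]

theorem addRel_swap_mul_apply_le [DecidableEq X] (γ : Perm X) (u v : X) :
    (fun x y => (swap u v * γ) x = y) ≤ EqvGen (addRel (fun x y => γ x = y) u v) := by
  rintro x _ rfl
  have hstep : EqvGen (addRel (fun x y => γ x = y) u v) x (γ x) := .rel _ _ (.inl rfl)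
  have huv : EqvGen (addRel (fun x y => γ x = y) u v) u v := .rel _ _ (.inr ⟨rfl, rfl⟩)
  rw [mul_apply]
  by_cases hu : γ x = u
  · rw [hu, swap_apply_left]; exact hu ▸ hstep |>.trans _ _ _ huv
  by_cases hv : γ x = v
  · rw [hv, swap_apply_right]; exact hv ▸ hstep |>.trans _ _ _ huv.symm
  · rw [swap_apply_of_ne_of_ne hu hv]; exact hstep

variable [Finite X]

theorem eqvGen_apply_eq_iff_sameCycle {σ : Perm X} {x y : X} :
    EqvGen (fun x y => σ x = y) x y ↔ σ.SameCycle x y := by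
  constructor
  · intro h
    induction h with
    | rel x y h => exact ⟨1, by simpa using h⟩
    | refl => exact .refl _ _
    | symm _ _ _ ih => exact ih.symm
    | trans _ _ _ _ _ ihxy ihyz => exact ihxy.trans ihyz
  · intro h
    obtain ⟨n, rfl⟩ := h.exists_nat_pow_eq
    clear h
    induction n with
    | zero => exact .refl _
    | succ n ih => exact ih.trans _ _ _ (.rel _ _ (by rw [pow_succ', mul_apply]))

theorem numCycles_le_card (σ : Perm X) : numCycles σ ≤ Nat.card X := numClasses_le_card _

theorem numCycles_one : numCycles (1 : Perm X) = Nat.card X :=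
  numClasses_eq_card id Function.surjective_id fun x y => by
    rw [eqvGen_apply_eq_iff_sameCycle, sameCycle_one, id, id]

theorem numJointOrbits_one_left (β : Perm X) : numJointOrbits 1 β = numCycles β :=
  numClasses_congr
    (fun x y h => h.elim (fun h => by rw [← h]; exact .refl _) fun h => .rel _ _ h)
    fun _ _ h => .rel _ _ (.inr h)

theorem numJointOrbits_le_numCycles_mul (α β : Perm X) :
    numJointOrbits α β ≤ numCycles (α * β) :=
  numClasses_le_of_le_eqvGen fun x _ h =>
    (EqvGen.rel x (β x) (.inr rfl)).trans _ _ _ (.rel _ _ (.inl h))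

theorem card_eq_two_mul_numCycles {σ : Perm X} (hσ : Function.Involutive σ)
    (hfix : ∀ x, σ x ≠ x) : Nat.card X = 2 * numCycles σ := by
  have := Fintype.ofFinite (Quot fun x y => σ x = y)
  have hfiber (q : Quot fun x y => σ x = y) : Nat.card {x // Quot.mk _ x = q} = 2 := by
    induction q using Quot.ind with | _ x₀ =>
    calc Nat.card {x // Quot.mk _ x = Quot.mk _ x₀}
        = Nat.card ({x₀, σ x₀} : Set X) := Nat.card_congr <| Equiv.subtypeEquivRight fun x => by
          rw [Quot.eq, eqvGen_apply_eq_iff_sameCycle, sameCycle_comm,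
            sameCycle_iff_of_involutive hσ]
          rfl
      _ = 2 := by rw [Nat.card_coe_set_eq, Set.ncard_pair (hfix x₀).symm]
  rw [← Nat.card_congr (Equiv.sigmaFiberEquiv (Quot.mk fun x y => σ x = y)), Nat.card_sigma]
  simp [hfiber, numCycles, numClasses, Nat.card_eq_fintype_card, mul_comm]

theorem sameCycle_swap_mul_of_not_sameCycle [DecidableEq X] {δ : Perm X} {u v : X}
    (h : ¬δ.SameCycle u v) : (swap u v * δ).SameCycle u v := by
  have hv : ∀ n : ℕ, (swap u v * δ).SameCycle v ((δ ^ n) v) := by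
    intro n
    induction n with
    | zero => exact .refl _ _
    | succ n ih =>
      rw [pow_succ', mul_apply]
      by_cases hx : δ ((δ ^ n) v) = v
      · rw [hx]
      have hxu : δ ((δ ^ n) v) ≠ u := fun hxu => by
        have hvu : δ.SameCycle v u := ⟨(n + 1 : ℕ), by rw [zpow_natCast, pow_succ', mul_apply, hxu]⟩
        exact h hvu.symm
      rw [← swap_apply_of_ne_of_ne hxu hx, ← mul_apply]
      exact sameCycle_apply_right.2 ih
  have hsymm : δ.SameCycle v (δ.symm v) := ⟨-1, by simp⟩
  obtain ⟨n, hn⟩ := hsymm.exists_nat_pow_eq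
  have := sameCycle_apply_right.2 (hn ▸ hv n)
  rw [mul_apply, apply_symm_apply, swap_apply_right] at this
  exact this.symm

variable [DecidableEq X]

theorem numClasses_addRel_swap_mul (γ : Perm X) (u v : X) :
    numClasses (addRel (fun x y => (swap u v * γ) x = y) u v) =
      numClasses (addRel (fun x y => γ x = y) u v) := by
  have key (γ : Perm X) : addRel (fun x y => (swap u v * γ) x = y) u v ≤
      EqvGen (addRel (fun x y => γ x = y) u v) := fun x y h =>
    h.elim (addRel_swap_mul_apply_le γ u v x y) (.rel _ _ ∘ .inr)
  refine numClasses_congr (key γ) ?_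
  simpa only [swap_mul_self_mul] using key (swap u v * γ)

theorem numClasses_addRel_swap_mul_of_joint (α β : Perm X) (u v : X) :
    numClasses (addRel (fun x y => (swap u v * α) x = y ∨ β x = y) u v) =
      numClasses (addRel (fun x y => α x = y ∨ β x = y) u v) := by
  have key (α : Perm X) : addRel (fun x y => (swap u v * α) x = y ∨ β x = y) u v ≤
      EqvGen (addRel (fun x y => α x = y ∨ β x = y) u v) := by
    rintro x y ((h | h) | h)
    · exact EqvGen.mono (fun a b => Or.imp_left Or.inl) x y (addRel_swap_mul_apply_le α u v x y h)
    · exact .rel _ _ (.inl (.inr h))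
    · exact .rel _ _ (.inr h)
  refine numClasses_congr (key α) ?_
  simpa only [swap_mul_self_mul] using key (swap u v * α)

theorem numCycles_swap_mul {γ : Perm X} {u v : X} (hγ : γ.SameCycle u v)
    (h : ¬(swap u v * γ).SameCycle u v) : numCycles (swap u v * γ) = numCycles γ + 1 := by
  rw [← eqvGen_apply_eq_iff_sameCycle] at hγ h
  rw [numCycles, numCycles, ← numClasses_addRel_add_one h, numClasses_addRel_swap_mul,
    numClasses_addRel_of_eqvGen hγ]

theorem numCycles_le_numCycles_swap_mul_add_one (γ : Perm X) (u v : X) :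
    numCycles γ ≤ numCycles (swap u v * γ) + 1 := by
  have := numClasses_addRel_le (r := fun x y => (swap u v * γ) x = y) (a := u) (b := v)
  rw [numClasses_addRel_swap_mul] at this
  have := numClasses_le_numClasses_addRel_add_one (r := fun x y => γ x = y) (a := u) (b := v)
  rw [numCycles, numCycles]
  omega

theorem numJointOrbits_swap_mul_of_sameCycle {α : Perm X} (β : Perm X) {u : X}
    (h : (swap u (α u) * α * β).SameCycle u (α u)) :
    numJointOrbits (swap u (α u) * α) β = numJointOrbits α β := by
  have hstep : (fun x y => (swap u (α u) * α * β) x = y) ≤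
      EqvGen (fun x y => (swap u (α u) * α) x = y ∨ β x = y) := fun x _ hxy =>
    (EqvGen.rel x (β x) (.inr rfl)).trans _ _ _ (.rel _ _ (.inl hxy))
  have hjoint := EqvGen.eqvGen_le hstep _ _ (eqvGen_apply_eq_iff_sameCycle.2 h)
  rw [numJointOrbits, numJointOrbits, ← numClasses_addRel_of_eqvGen hjoint,
    numClasses_addRel_swap_mul_of_joint, numClasses_addRel_of_eqvGen (.rel _ _ (.inl rfl))]

theorem numJointOrbits_swap_mul_le (α β : Perm X) (u : X) :
    numJointOrbits (swap u (α u) * α) β ≤ numJointOrbits α β + 1 := by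
  have := numClasses_le_numClasses_addRel_add_one
    (r := fun x y => (swap u (α u) * α) x = y ∨ β x = y) (a := u) (b := α u)
  rwa [numClasses_addRel_swap_mul_of_joint, numClasses_addRel_of_eqvGen (.rel _ _ (.inl rfl))]
    at this

/-- Euler's inequality for the combinatorial map `(α, β)`: its genus is nonnegative.
Splitting a cycle of `α` by a transposition reduces to `α = 1`, where equality holds. -/
theorem numCycles_add_numCycles_add_numCycles_mul_le (α β : Perm X) :
    numCycles α + numCycles β + numCycles (α * β) ≤ Nat.card X + 2 * numJointOrbits α β := by
  induction hn : Nat.card X - numCycles α using Nat.strong_induction_on generalizing α with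
  | _ n ih =>
  by_cases hα : α = 1
  · rw [hα, numCycles_one, one_mul, numJointOrbits_one_left]
    omega
  obtain ⟨u, hu⟩ : ∃ u, α u ≠ u := not_forall.mp fun h => hα (Equiv.ext h)
  have hsplit : numCycles (swap u (α u) * α) = numCycles α + 1 := by
    refine numCycles_swap_mul ⟨1, by simp⟩ fun h => hu (h.eq_of_left ?_).symm
    simp [Function.IsFixedPt]
  have IH := ih (Nat.card X - numCycles (swap u (α u) * α))
    (by have := numCycles_le_card (swap u (α u) * α); omega) _ rfl
  have hmul : swap u (α u) * α * β = swap u (α u) * (α * β) := mul_assoc _ _ _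
  by_cases hsc : (swap u (α u) * α * β).SameCycle u (α u)
  · have hjoint := numJointOrbits_swap_mul_of_sameCycle β hsc
    have hcyc := numCycles_le_numCycles_swap_mul_add_one (α * β) u (α u)
    rw [← hmul] at hcyc
    omega
  · have hαβ : (α * β).SameCycle u (α u) := by
      simpa only [hmul, swap_mul_self_mul] using sameCycle_swap_mul_of_not_sameCycle hsc
    have hcyc := numCycles_swap_mul hαβ (hmul ▸ hsc)
    have hjoint := numJointOrbits_swap_mul_le α β u
    rw [← hmul] at hcyc
    omega

end Equiv.Perm

namespace RibbonGraph

open Relation Equiv Perm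

variable {G : RibbonGraph}

theorem vertexOf_eq_iff {a b : G.H} : G.vertexOf a = G.vertexOf b ↔ G.rot.SameCycle a b :=
  Quotient.eq

theorem edgeOf_eq_iff {a b : G.H} : G.edgeOf a = G.edgeOf b ↔ G.edgePair.SameCycle a b :=
  Quotient.eq

theorem edgeOf_edgePair (h : G.H) : G.edgeOf (G.edgePair h) = G.edgeOf h :=
  edgeOf_eq_iff.2 ⟨1, by simp [G.edgePair_invol]⟩

variable (G) (D : Finset G.EdgeSet)

abbrev KeptHalfEdge : Type := {h : G.H // G.edgeOf h ∉ D}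

/-- An isolated vertex of `G − D` counts as a component and as a face of `G − D` on its own. -/
def IsIsolatedVertex (v : G.VertexSet) : Prop := ∀ h, G.vertexOf h = v → G.edgeOf h ∈ D

def keptEdgePair : Perm (G.KeptHalfEdge D) :=
  G.edgePair.subtypePerm fun h => by rw [edgeOf_edgePair]

theorem exists_rot_pow_kept (x : G.KeptHalfEdge D) :
    ∃ j, 0 < j ∧ G.edgeOf ((G.rot ^ j) x.1) ∉ D :=
  ⟨orderOf G.rot, orderOf_pos G.rot, by rw [pow_orderOf_eq_one]; exact x.2⟩

def returnTime (x : G.KeptHalfEdge D) : ℕ := Nat.find (G.exists_rot_pow_kept D x)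

variable {G D}

theorem returnTime_pos (x : G.KeptHalfEdge D) : 0 < G.returnTime D x :=
  (Nat.find_spec (G.exists_rot_pow_kept D x)).1

theorem edgeOf_rot_pow_returnTime_notMem (x : G.KeptHalfEdge D) :
    G.edgeOf ((G.rot ^ G.returnTime D x) x.1) ∉ D :=
  (Nat.find_spec (G.exists_rot_pow_kept D x)).2

theorem edgeOf_rot_pow_mem_of_lt_returnTime {x : G.KeptHalfEdge D} {j : ℕ} (hj₀ : 0 < j)
    (hj : j < G.returnTime D x) : G.edgeOf ((G.rot ^ j) x.1) ∈ D :=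
  not_not.1 fun hk => Nat.find_min _ hj ⟨hj₀, hk⟩

theorem returnTime_eq_iff {x : G.KeptHalfEdge D} {m : ℕ} :
    G.returnTime D x = m ↔ (0 < m ∧ G.edgeOf ((G.rot ^ m) x.1) ∉ D) ∧
      ∀ j, 0 < j → j < m → G.edgeOf ((G.rot ^ j) x.1) ∈ D := by
  rw [returnTime, Nat.find_eq_iff]
  refine and_congr_right' (forall_congr' fun j => ?_)
  tauto

theorem rot_pow_returnTime_injective :
    Function.Injective fun x : G.KeptHalfEdge D =>
      (G.rot ^ G.returnTime D x) x.1 := by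
  intro x y hxy
  wlog hle : G.returnTime D x ≤ G.returnTime D y generalizing x y
  · exact (this hxy.symm (le_of_not_ge hle)).symm
  obtain ⟨k, hk⟩ := Nat.exists_eq_add_of_le hle
  dsimp only at hxy
  rw [hk, pow_add, Perm.mul_apply] at hxy
  have hx : x.1 = (G.rot ^ k) y.1 := (G.rot ^ G.returnTime D x).injective hxy
  rcases k.eq_zero_or_pos with rfl | hk₀
  · exact Subtype.ext hx
  · exact absurd (edgeOf_rot_pow_mem_of_lt_returnTime (x := y) hk₀
      (by have := returnTime_pos x; omega)) (hx ▸ x.2)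

variable (G D)

/-- The rotation of `G − D`: the first return of `G.rot` to the half-edges of `G − D`. -/
def keptRot : Perm (G.KeptHalfEdge D) :=
  Equiv.ofBijective (fun x => ⟨_, edgeOf_rot_pow_returnTime_notMem x⟩)
    (Finite.injective_iff_bijective.1 fun _ _ h =>
      rot_pow_returnTime_injective (congrArg Subtype.val h))

variable {G D}

theorem keptRot_val (x : G.KeptHalfEdge D) :
    (G.keptRot D x).1 = (G.rot ^ G.returnTime D x) x.1 := rfl

theorem faceStep_iff {a b : G.H} : G.faceStep D a b ↔
    ∃ (ha : G.edgeOf a ∉ D) (hb : G.edgeOf b ∉ D),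
      (G.keptRot D * G.keptEdgePair D) ⟨a, ha⟩ = ⟨b, hb⟩ := by
  constructor
  · rintro ⟨ha, hb, m, hm, rfl, hmid⟩
    refine ⟨ha, hb, Subtype.ext ?_⟩
    rw [Perm.mul_apply, keptRot_val, returnTime_eq_iff.2 ⟨⟨hm, hb⟩, hmid⟩]
    rfl
  · rintro ⟨ha, hb, h⟩
    exact ⟨ha, hb, _, returnTime_pos _, (congrArg Subtype.val h).symm,
      fun j => edgeOf_rot_pow_mem_of_lt_returnTime⟩

theorem eqvGen_keptRot_iff {x y : G.KeptHalfEdge D} :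
    EqvGen (fun a b => G.keptRot D a = b) x y ↔ G.rot.SameCycle x.1 y.1 := by
  constructor
  · intro h
    induction h with
    | rel a b h => exact ⟨G.returnTime D a, by rw [← h, keptRot_val, zpow_natCast]⟩
    | refl => exact .refl _ _
    | symm _ _ _ ih => exact ih.symm
    | trans _ _ _ _ _ ihab ihbc => exact ihab.trans ihbc
  · intro h
    obtain ⟨n, hn⟩ := h.exists_nat_pow_eq
    clear h
    induction n using Nat.strong_induction_on generalizing x with
    | _ n ih =>
    rcases n.eq_zero_or_pos with rfl | hn₀
    · exact Subtype.ext hn ▸ .refl _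
    have hle : G.returnTime D x ≤ n := Nat.find_min' _ ⟨hn₀, hn ▸ y.2⟩
    refine (EqvGen.rel x (G.keptRot D x) rfl).trans _ _ _ (ih (n - G.returnTime D x)
      (by have := returnTime_pos x; omega) (x := G.keptRot D x) ?_)
    rw [keptRot_val, ← Perm.mul_apply, ← pow_add, Nat.sub_add_cancel hle, hn]

theorem eqvGen_keptEdgePair_iff {x y : G.KeptHalfEdge D} :
    EqvGen (fun a b => G.keptEdgePair D a = b) x y ↔ G.edgePair.SameCycle x.1 y.1 := by
  rw [Perm.eqvGen_apply_eq_iff_sameCycle, keptEdgePair, Perm.sameCycle_subtypePerm]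

theorem not_isIsolatedVertex (x : G.KeptHalfEdge D) : ¬G.IsIsolatedVertex D (G.vertexOf x.1) :=
  fun h => x.2 (h x.1 rfl)

theorem exists_vertexOf_eq_of_not_isIsolatedVertex {v : G.VertexSet}
    (hv : ¬G.IsIsolatedVertex D v) : ∃ x : G.KeptHalfEdge D, G.vertexOf x.1 = v := by
  simp only [IsIsolatedVertex, not_forall, exists_prop] at hv
  obtain ⟨h, hv, hk⟩ := hv
  exact ⟨⟨h, hk⟩, hv⟩

theorem numEdgesDel_eq_numCycles : G.numEdgesDel D = numCycles (G.keptEdgePair D) := by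
  have hcard : Nat.card {e // e ∈ D} + Nat.card {e // e ∉ D} = G.numEdges := by
    rw [← Nat.card_sum, Nat.card_congr (Equiv.sumCompl _), numEdges]
  have hD : Nat.card {e // e ∈ D} = D.card := by rw [Nat.card_eq_fintype_card, Fintype.card_coe]
  rw [numEdgesDel, numCycles, numClasses_eq_card (fun x => (⟨G.edgeOf x.1, x.2⟩ : {e // e ∉ D}))]
  · omega
  · rintro ⟨e, he⟩
    obtain ⟨h, rfl⟩ := Quotient.exists_rep e
    exact ⟨⟨h, he⟩, rfl⟩
  · intro x y
    rw [Subtype.mk.injEq, edgeOf_eq_iff, eqvGen_keptEdgePair_iff]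

theorem card_keptHalfEdge : Nat.card (G.KeptHalfEdge D) = 2 * numCycles (G.keptEdgePair D) :=
  card_eq_two_mul_numCycles (fun x => Subtype.ext (G.edgePair_invol x.1))
    fun x h => G.edgePair_nofix x.1 (congrArg Subtype.val h)

theorem numVertices_eq :
    G.numVertices = numCycles (G.keptRot D) + Nat.card {v // G.IsIsolatedVertex D v} := by
  have hkept : numCycles (G.keptRot D) = Nat.card {v // ¬G.IsIsolatedVertex D v} := by
    refine numClasses_eq_card (fun x => ⟨G.vertexOf x.1, not_isIsolatedVertex x⟩)
      (fun ⟨v, hv⟩ => ?_) fun x y => ?_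
    · obtain ⟨x, rfl⟩ := exists_vertexOf_eq_of_not_isIsolatedVertex hv
      exact ⟨x, rfl⟩
    · rw [Subtype.mk.injEq, vertexOf_eq_iff, eqvGen_keptRot_iff]
  rw [hkept, numVertices, ← Nat.card_congr (Equiv.sumCompl (G.IsIsolatedVertex D)), Nat.card_sum,
    add_comm]

theorem facesDel_eq : G.facesDel D =
    numCycles (G.keptRot D * G.keptEdgePair D) + Nat.card {v // G.IsIsolatedVertex D v} := by
  rw [facesDel]
  congr 1
  refine (numClasses_eq_card (fun x => ⟨Quotient.mk _ x.1, x.1, x.2, rfl⟩)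
    (fun ⟨_, h, hk, hc⟩ => ⟨⟨h, hk⟩, Subtype.ext hc⟩) fun x y => ?_).symm
  rw [Subtype.mk.injEq, Quotient.eq]
  exact eqvGen_iff_of_subtype fun _ _ => faceStep_iff

variable (G D) in
def vertexComponent (v : G.VertexSet) :
    Quot (fun x y : G.KeptHalfEdge D => G.keptRot D x = y ∨ G.keptEdgePair D x = y) ⊕
      {v // G.IsIsolatedVertex D v} :=
  if hv : G.IsIsolatedVertex D v then .inr ⟨v, hv⟩
  else .inl (Quot.mk _ (exists_vertexOf_eq_of_not_isIsolatedVertex hv).choose)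

theorem vertexComponent_vertexOf (x : G.KeptHalfEdge D) :
    G.vertexComponent D (G.vertexOf x.1) = .inl (Quot.mk _ x) := by
  rw [vertexComponent, dif_neg (not_isIsolatedVertex x)]
  refine congrArg Sum.inl (Quot.eqvGen_sound (EqvGen.mono (fun _ _ => Or.inl) _ _ ?_))
  exact eqvGen_keptRot_iff.2 (vertexOf_eq_iff.1
    (exists_vertexOf_eq_of_not_isIsolatedVertex (not_isIsolatedVertex x)).choose_spec)

theorem eqvGen_connStep_of_joint {x y : G.KeptHalfEdge D}
    (h : EqvGen (fun x y => G.keptRot D x = y ∨ G.keptEdgePair D x = y) x y) :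
    EqvGen (G.connStep D) x.1 y.1 := by
  induction h with
  | rel x y h =>
    refine .rel _ _ (h.imp (fun h => eqvGen_keptRot_iff.1 (.rel _ _ h)) fun h => ⟨x.2, ?_⟩)
    exact (congrArg Subtype.val h).symm
  | refl => exact .refl _
  | symm _ _ _ ih => exact ih.symm
  | trans _ _ _ _ _ ihxy ihyz => exact ihxy.trans _ _ _ ihyz

theorem vertexComponent_eq_iff {a b : G.H} :
    G.vertexComponent D (G.vertexOf a) = G.vertexComponent D (G.vertexOf b) ↔
      EqvGen (G.connStep D) a b := by
  constructor
  · intro h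
    by_cases ha : G.IsIsolatedVertex D (G.vertexOf a) <;>
      by_cases hb : G.IsIsolatedVertex D (G.vertexOf b)
    · simp only [vertexComponent, dif_pos ha, dif_pos hb, Sum.inr.injEq, Subtype.mk.injEq] at h
      exact .rel _ _ (.inl (vertexOf_eq_iff.1 h))
    · simp [vertexComponent, ha, hb] at h
    · simp [vertexComponent, ha, hb] at h
    obtain ⟨x, hx⟩ := exists_vertexOf_eq_of_not_isIsolatedVertex ha
    obtain ⟨y, hy⟩ := exists_vertexOf_eq_of_not_isIsolatedVertex hb
    rw [← hx, ← hy, vertexComponent_vertexOf, vertexComponent_vertexOf, Sum.inl.injEq] at h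
    exact (EqvGen.rel _ _ (.inl (vertexOf_eq_iff.1 hx.symm))).trans _ _ _
      ((eqvGen_connStep_of_joint (Quot.eqvGen_exact h)).trans _ _ _
        (.rel _ _ (.inl (vertexOf_eq_iff.1 hy))))
  · intro h
    induction h with
    | rel a b h =>
      rcases h with h | ⟨ha, rfl⟩
      · rw [vertexOf_eq_iff.2 h]
      · exact (vertexComponent_vertexOf ⟨a, ha⟩).trans
          ((congrArg Sum.inl (Quot.sound (.inr rfl))).trans
            (vertexComponent_vertexOf (G.keptEdgePair D ⟨a, ha⟩)).symm)
    | refl => rfl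
    | symm _ _ _ ih => exact ih.symm
    | trans _ _ _ _ _ ihab ihbc => exact ihab.trans ihbc

theorem b0Del_eq : G.b0Del D =
    numJointOrbits (G.keptRot D) (G.keptEdgePair D) + Nat.card {v // G.IsIsolatedVertex D v} := by
  rw [numJointOrbits, numClasses, ← Nat.card_sum]
  refine numClasses_eq_card (r := EqvGen (G.connStep D))
    (fun h => G.vertexComponent D (G.vertexOf h)) ?_ fun a b => ?_
  · rintro (q | ⟨v, hv⟩)
    · induction q using Quot.ind with | _ x => exact ⟨x.1, vertexComponent_vertexOf x⟩
    · obtain ⟨h, rfl⟩ := Quotient.exists_rep v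
      exact ⟨h, dif_pos hv⟩
  · rw [(EqvGen.is_equivalence _).eqvGen_iff]
    exact vertexComponent_eq_iff

theorem b0Del_le_facesDel : G.b0Del D ≤ G.facesDel D := by
  rw [b0Del_eq, facesDel_eq]
  exact Nat.add_le_add_right (numJointOrbits_le_numCycles_mul _ _) _

/-- Twice the genus of `G − D` is nonnegative. -/
theorem b1Del_sub_facesDel_add_b0Del_nonneg : 0 ≤ G.b1Del D - G.facesDel D + G.b0Del D := by
  have := numCycles_add_numCycles_add_numCycles_mul_le (G.keptRot D) (G.keptEdgePair D)
  rw [card_keptHalfEdge] at this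
  rw [b1Del, numEdgesDel_eq_numCycles, numVertices_eq (D := D), b0Del_eq, facesDel_eq]
  push_cast
  omega

theorem toNat_b1Del_sub_genusDel_eq_zero_iff :
    (G.b1Del D - G.genusDel D).toNat = 0 ↔ (G.b1Del D).toNat = 0 := by
  have hgenus := b1Del_sub_facesDel_add_b0Del_nonneg (G := G) (D := D)
  have hfaces : (G.b0Del D : ℤ) ≤ G.facesDel D := by exact_mod_cast b0Del_le_facesDel
  rw [genusDel]
  omega

end RibbonGraph

/-- For any virtual graph `G`, the `S`-polynomial and the flow polynomial of the
underlying graph agree at `Q = 0`: `S_G(0) = F_G(0)`. -/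
theorem stmt12 (G : RibbonGraph) : G.SPoly.eval 0 = G.FPoly.eval 0 := by
  simp only [RibbonGraph.SPoly, RibbonGraph.FPoly, eval_finsetSum, eval_mul, eval_pow, eval_neg,
    eval_one, eval_X, zero_pow_eq, RibbonGraph.toNat_b1Del_sub_genusDel_eq_zero_iff]
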